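/- arXiv:2208.11800 — 2 statements merged into one kernel-verified Lean document; each statement's English description precedes it below -/
import Mathlib

section
/- Let n and e be natural numbers with e ≤ n. Then Σ_{i=0}^{n} 3^i · C(n,i) · (Σ_{m=0}^{e} P(m, i, n))^2 = 4^n · Σ_{m=0}^{e} 3^m · C(n,m). -/
open Finset Filter Topology

/-- Krawtchouk polynomial (alphabet size q = 4) evaluated at integer points:
`P(i, t, n) = Σ_{j=0}^{i} (-1)^j · 3^{i-j} · C(t, j) · C(n-t, i-j)`. -/
def K (i t n : ℕ) : ℤ :=
  ∑ j ∈ Finset.range (i + 1),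
    (-1 : ℤ) ^ j * 3 ^ (i - j) * (t.choose j) * ((n - t).choose (i - j))

/-- Li–Xing coefficient `f_{t;n} = (Σ_{m=0}^{e} P(m, t, n))²` for correction radius `e`. -/
def fCoeff (e t n : ℕ) : ℤ := (∑ m ∈ Finset.range (e + 1), K m t n) ^ 2

/-- Li–Xing function `f(t; n) = Σ_{i=0}^{n} f_{i;n} · P(i, t, n)`. -/
def fVal (e t n : ℕ) : ℤ :=
  ∑ i ∈ Finset.range (n + 1), fCoeff e i n * K i t n

section Aux
open Polynomial


lemma coeff_lin_pow {R : Type*} [CommRing R] (a b : R) (N m : ℕ) :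
    ((C a + C b * X : R[X]) ^ N).coeff m = a ^ (N - m) * b ^ m * N.choose m := by
  rw [add_comm, add_pow, finset_sum_coeff]
  have h : ∀ k, ((C b * X) ^ k * C a ^ (N - k) * (N.choose k : R[X])).coeff m
      = if k = m then a ^ (N - k) * b ^ k * N.choose k else 0 := by
    intro k
    rw [mul_pow, ← C_pow, ← C_pow, ← C_eq_natCast, coeff_mul_C, coeff_mul_C, coeff_C_mul,
      coeff_X_pow]
    by_cases hk : k = m
    · subst hk; simp; ring
    · simp [Ne.symm hk, hk]
  rw [Finset.sum_congr rfl fun k _ => h k, Finset.sum_ite_eq' (Finset.range (N+1)) m]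
  split
  · rfl
  · rename_i hm
    simp only [Finset.mem_range, not_lt] at hm
    rw [Nat.choose_eq_zero_of_lt (by omega), Nat.cast_zero, mul_zero]

lemma coeff_K (i n m : ℕ) :
    (((1 - X) ^ i * (1 + C 3 * X) ^ (n - i) : ℤ[X])).coeff m = K m i n := by
  have h1 : (1 - X : ℤ[X]) = C 1 + C (-1) * X := by simp [sub_eq_add_neg]
  have h2 : (1 + C 3 * X : ℤ[X]) = C 1 + C 3 * X := by simp
  rw [h1, h2, coeff_mul, Finset.Nat.sum_antidiagonal_eq_sum_range_succ_mk, K]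
  refine Finset.sum_congr rfl fun j _ => ?_
  rw [coeff_lin_pow, coeff_lin_pow]
  ring

noncomputable abbrev S := Polynomial (Polynomial ℤ)

lemma gen (n : ℕ) :
    ∑ i ∈ Finset.range (n + 1),
        ((3 : ℤ) ^ i * (n.choose i)) •
          ((((1 : S) - X) ^ i * (1 + 3 * X) ^ (n - i)) *
            C ((1 - X) ^ i * (1 + C 3 * X) ^ (n - i))) =
      (C (4 : Polynomial ℤ) + C (12 * X) * X) ^ n := by
  have key : (C (4 : Polynomial ℤ) + C (12 * X) * X : S)
      = (3 * ((1 : S) - X) * (1 - C X)) + ((1 + 3 * X) * (1 + 3 * C X)) := by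
    simp only [map_mul, map_ofNat]
    ring
  rw [key, add_pow]
  refine Finset.sum_congr rfl fun i hi => ?_
  simp only [map_mul, map_pow, map_sub, map_add, map_one, map_ofNat]
  rw [zsmul_eq_mul, mul_pow (3 * ((1 : S) - X)) (1 - C X),
    mul_pow (3 : S) (1 - X), mul_pow ((1 : S) + 3 * X) ((1 : S) + 3 * C X) (n - i)]
  push_cast
  ring

lemma ortho (n m m' : ℕ) :
    ∑ i ∈ Finset.range (n + 1), (3 : ℤ) ^ i * (n.choose i) * (K m i n * K m' i n) =
      if m' = m then (4 : ℤ) ^ (n - m) * 12 ^ m * (n.choose m) else 0 := by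
  have h := congrArg (fun p : S => (p.coeff m).coeff m') (gen n)
  rw [finset_sum_coeff, finset_sum_coeff] at h
  -- left side
  have hL : ∀ i ∈ Finset.range (n + 1),
      ((((3 : ℤ) ^ i * (n.choose i)) •
          ((((1 : S) - X) ^ i * (1 + 3 * X) ^ (n - i)) *
            C ((1 - X) ^ i * (1 + C 3 * X) ^ (n - i)))).coeff m).coeff m'
        = (3 : ℤ) ^ i * (n.choose i) * (K m i n * K m' i n) := by
    intro i _
    have hmap : (((1 : S) - X) ^ i * (1 + 3 * X) ^ (n - i))
        = Polynomial.map (C : ℤ →+* Polynomial ℤ) ((1 - X) ^ i * (1 + C 3 * X) ^ (n - i)) := by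
      simp only [Polynomial.map_mul, Polynomial.map_pow, Polynomial.map_sub, Polynomial.map_add,
        Polynomial.map_one, Polynomial.map_X, Polynomial.map_C, map_ofNat, Polynomial.map_ofNat]
    rw [coeff_smul, hmap, coeff_mul_C, coeff_map, coeff_K, coeff_smul, coeff_C_mul, coeff_K,
      zsmul_eq_mul]
    push_cast
    ring
  rw [Finset.sum_congr rfl hL] at h
  rw [h, coeff_lin_pow]
  have : ((4 : Polynomial ℤ) ^ (n - m) * (12 * X) ^ m * (n.choose m : Polynomial ℤ))
      = C ((4 : ℤ) ^ (n - m) * 12 ^ m * (n.choose m)) * X ^ m := by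
    simp only [mul_pow, ← C_eq_natCast, map_mul, map_pow, map_ofNat]
    ring
  rw [this, coeff_C_mul, coeff_X_pow]
  split <;> simp_all

end Aux

/-- Evaluation of the Li–Xing function at `t = 0`:
`f(0; n) = 4^n · Σ_{m=0}^{e} 3^m C(n,m)`, stated as the explicit identity
`Σ_{i=0}^{n} 3^i C(n,i) (Σ_{m=0}^{e} P(m,i,n))² = 4^n Σ_{m=0}^{e} 3^m C(n,m)`. -/
theorem liXing_f_at_zero (n e : ℕ) (he : e ≤ n) :
    ∑ i ∈ Finset.range (n + 1),
        (3 : ℤ) ^ i * (n.choose i) * (∑ m ∈ Finset.range (e + 1), K m i n) ^ 2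
      = 4 ^ n * ∑ m ∈ Finset.range (e + 1), (3 : ℤ) ^ m * (n.choose m) := by
  have h1 : ∀ i, (∑ m ∈ Finset.range (e + 1), K m i n) ^ 2
      = ∑ m ∈ Finset.range (e + 1), ∑ m' ∈ Finset.range (e + 1), K m i n * K m' i n := by
    intro i; rw [sq, Finset.sum_mul_sum]
  simp only [h1, Finset.mul_sum]
  rw [Finset.sum_comm]
  rw [Finset.sum_congr rfl fun m _ => Finset.sum_comm]
  have h2 : ∀ m ∈ Finset.range (e + 1),
      ∑ m' ∈ Finset.range (e + 1), ∑ i ∈ Finset.range (n + 1),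
        (3 : ℤ) ^ i * (n.choose i) * (K m i n * K m' i n)
      = 4 ^ n * ((3 : ℤ) ^ m * (n.choose m)) := by
    intro m hm
    rw [Finset.sum_congr rfl fun m' _ => ortho n m m',
      Finset.sum_ite_eq' (Finset.range (e + 1)) m, if_pos hm]
    have hmn : m ≤ n := le_trans (by simpa using Nat.lt_succ_iff.mp (Finset.mem_range.mp hm)) he
    have : (12 : ℤ) ^ m = 4 ^ m * 3 ^ m := by rw [← mul_pow]; norm_num
    rw [this, show (4:ℤ)^(n-m) * (4^m * 3^m) * (n.choose m) = (4^(n-m) * 4^m) * (3^m * n.choose m) by ring,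
      ← pow_add, Nat.sub_add_cancel hmn]
  rw [Finset.sum_congr rfl h2, ← Finset.mul_sum]
end

section
/- Fix natural numbers e and t with t ≥ 1. Then, as n → ∞, the real sequence f(t; n) / (4^n · n^e) converges to 0, where f(t; n) = Σ_{i=0}^{n} (Σ_{m=0}^{e} P(m, i, n))^2 · P(i, t, n). -/
open Finset Filter Topology

/-!
Identify the alphabet with `𝔽₂²` and pair `(𝔽₂²)ⁿ` with itself through the symmetric bicharacter
`innerSign`. Summing `innerSign v y` over the Hamming sphere of radius `i` gives `K i |y| n`, so
orthogonality of characters turns `f(|z|; n)` into `4ⁿ · #{u ∈ B_e | u + z ∈ B_e}`. For `z ≠ 0`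
every coordinate in the support of `z` is non-zero in `u` or in `u + z`, so the part of such a `u`
off that support has weight `< e`: the count is at most `4^|z| · #B_{e-1} = O(n^{e-1})`.
-/

open Polynomial

abbrev V4 := ZMod 2 × ZMod 2

def pairingSign (x y : V4) : ℤ := if x.1 * y.2 + x.2 * y.1 = 0 then 1 else -1

lemma pairingSign_comm : ∀ x y : V4, pairingSign x y = pairingSign y x := by decide

lemma pairingSign_add_left :
    ∀ x y z : V4, pairingSign (x + y) z = pairingSign x z * pairingSign y z := by
  decide

lemma pairingSign_zero_left : ∀ y : V4, pairingSign 0 y = 1 := by decide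

lemma sum_pairingSign_right :
    ∀ x : V4, ∑ y, pairingSign x y = if x = 0 then 4 else 0 := by
  decide

lemma sum_ite_mul_pairingSign {R : Type*} [CommRing R] (x : R) (c : V4) :
    ∑ a : V4, (if a = 0 then 1 else x) * (pairingSign a c : R) =
      if c = 0 then 1 + 3 * x else 1 - x := by
  have hsum : ∀ c : V4, ∑ a ∈ {0}ᶜ, pairingSign a c = if c = 0 then 3 else -1 := by
    decide
  rw [Fintype.sum_eq_add_sum_compl 0, if_pos rfl, Finset.sum_congr rfl fun a ha => by
      rw [if_neg (Finset.mem_compl.1 ha ∘ Finset.mem_singleton.2)], ← Finset.mul_sum,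
    ← Int.cast_sum, hsum, pairingSign_zero_left]
  split_ifs <;> push_cast <;> ring

section HammingSpace

variable {n : ℕ}

def innerSign (x y : Fin n → V4) : ℤ := ∏ k, pairingSign (x k) (y k)

lemma pow_hammingNorm {ι β M : Type*} [Fintype ι] [Zero β] [DecidableEq β] [CommMonoid M]
    (x : M) (v : ι → β) :
    x ^ hammingNorm v = ∏ k, if v k = 0 then 1 else x := by
  rw [Finset.prod_ite, Finset.prod_const_one, one_mul, Finset.prod_const]
  rfl

lemma sum_pow_hammingNorm_mul_innerSign {R : Type*} [CommRing R] (x : R) (y : Fin n → V4) :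
    ∑ v, x ^ hammingNorm v * (innerSign v y : R) =
      (1 - x) ^ hammingNorm y * (1 + 3 * x) ^ (n - hammingNorm y) := by
  have hcard : #{k | y k = 0} = n - hammingNorm y := by
    have := Finset.card_filter_add_card_filter_not (s := univ) (p := fun k => y k = 0)
    rw [Finset.card_univ, Fintype.card_fin] at this
    simp only [hammingNorm, ne_eq]
    omega
  calc ∑ v, x ^ hammingNorm v * (innerSign v y : R)
      = ∑ v : Fin n → V4, ∏ k, (if v k = 0 then 1 else x) * (pairingSign (v k) (y k) : R) := by
        simp only [pow_hammingNorm, innerSign, Int.cast_prod, Finset.prod_mul_distrib]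
    _ = ∏ k, ∑ a, (if a = 0 then 1 else x) * (pairingSign a (y k) : R) := by
        rw [Fintype.prod_sum]
    _ = ∏ k, if y k = 0 then 1 + 3 * x else 1 - x := by
        simp only [sum_ite_mul_pairingSign]
    _ = (1 - x) ^ hammingNorm y * (1 + 3 * x) ^ (n - hammingNorm y) := by
        rw [Finset.prod_ite, Finset.prod_const, Finset.prod_const, hcard, mul_comm]
        rfl

lemma coeff_one_add_C_mul_X_pow {R : Type*} [CommRing R] (c : R) (m k : ℕ) :
    ((1 + C c * X) ^ m).coeff k = c ^ k * m.choose k := by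
  have : (1 + C c * X) ^ m = ((1 + X) ^ m).comp (C c * X) := by
    simp only [pow_comp, add_comp, one_comp, X_comp]
  rw [this, comp_C_mul_X_coeff, coeff_one_add_X_pow, mul_comm]

lemma K_eq_coeff (i t n : ℕ) :
    K i t n = ((1 - X : ℤ[X]) ^ t * (1 + 3 * X) ^ (n - t)).coeff i := by
  have h1 : (1 - X : ℤ[X]) = 1 + C (-1) * X := by simp [sub_eq_add_neg]
  have h3 : (1 + 3 * X : ℤ[X]) = 1 + C 3 * X := by simp
  rw [h1, h3, coeff_mul, Finset.Nat.sum_antidiagonal_eq_sum_range_succ_mk, K]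
  refine Finset.sum_congr rfl fun j _ => ?_
  simp only [coeff_one_add_C_mul_X_pow]
  ring

lemma sum_innerSign_sphere (y : Fin n → V4) (i : ℕ) :
    ∑ v with hammingNorm v = i, innerSign v y = K i (hammingNorm y) n := by
  have h := congrArg (coeff · i) (sum_pow_hammingNorm_mul_innerSign (X : ℤ[X]) y)
  simp only [finsetSum_coeff, Int.cast_id, ← C_eq_intCast, mul_comm _ (C _), coeff_C_mul,
    coeff_X_pow, mul_ite, mul_one, mul_zero] at h
  rw [K_eq_coeff, ← h, Finset.sum_filter]
  exact Finset.sum_congr rfl fun v _ => by simp only [eq_comm]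

lemma innerSign_comm (x y : Fin n → V4) : innerSign x y = innerSign y x :=
  Finset.prod_congr rfl fun _ _ => pairingSign_comm _ _

lemma innerSign_add_left (x y z : Fin n → V4) :
    innerSign (x + y) z = innerSign x z * innerSign y z := by
  simp only [innerSign, Pi.add_apply, pairingSign_add_left, Finset.prod_mul_distrib]

lemma sum_innerSign_right (x : Fin n → V4) :
    ∑ y, innerSign x y = if x = 0 then 4 ^ n else 0 := by
  simp only [innerSign]
  rw [← Fintype.prod_sum fun k b => pairingSign (x k) b]
  simp only [sum_pairingSign_right, Finset.prod_ite_zero, Finset.prod_const, Finset.card_univ,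
    Fintype.card_fin, Finset.mem_univ, true_implies, funext_iff, Pi.zero_apply]

def hammingBall (n e : ℕ) : Finset (Fin n → V4) := {v | hammingNorm v ≤ e}

lemma sum_K_eq_sum_innerSign_hammingBall (e : ℕ) (y : Fin n → V4) :
    ∑ m ∈ range (e + 1), K m (hammingNorm y) n = ∑ v ∈ hammingBall n e, innerSign v y := by
  rw [← Finset.sum_fiberwise_of_maps_to (s := hammingBall n e) (g := hammingNorm)
    (t := range (e + 1)) fun v hv => mem_range_succ_iff.2 (mem_filter.1 hv).2]
  refine Finset.sum_congr rfl fun m hm => ?_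
  rw [← sum_innerSign_sphere, hammingBall, Finset.filter_filter]
  congr 1
  ext v
  simp only [mem_filter, mem_univ, true_and]
  exact ⟨fun hv => ⟨hv ▸ mem_range_succ_iff.1 hm, hv⟩, And.right⟩

lemma fVal_hammingNorm_eq_sum (e : ℕ) (z : Fin n → V4) :
    fVal e (hammingNorm z) n = ∑ x, fCoeff e (hammingNorm x) n * innerSign x z := by
  have hle : ∀ x : Fin n → V4, hammingNorm x ≤ n := fun x =>
    hammingNorm_le_card_fintype.trans_eq (Fintype.card_fin n)
  rw [← Finset.sum_fiberwise_of_maps_to (g := hammingNorm) (t := range (n + 1))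
    fun x _ => mem_range_succ_iff.2 (hle x), fVal]
  refine Finset.sum_congr rfl fun i _ => ?_
  rw [← sum_innerSign_sphere, Finset.mul_sum]
  refine Finset.sum_congr rfl fun x hx => ?_
  rw [(mem_filter.1 hx).2, innerSign_comm]

lemma fCoeff_hammingNorm_mul_innerSign (e : ℕ) (x z : Fin n → V4) :
    fCoeff e (hammingNorm x) n * innerSign x z =
      ∑ u ∈ hammingBall n e, ∑ v ∈ hammingBall n e, innerSign (u + v + z) x := by
  rw [fCoeff, sum_K_eq_sum_innerSign_hammingBall, sq, Finset.sum_mul_sum, Finset.sum_mul]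
  simp only [Finset.sum_mul, innerSign_add_left, innerSign_comm x z]

lemma fVal_hammingNorm (e : ℕ) (z : Fin n → V4) :
    fVal e (hammingNorm z) n = 4 ^ n * #{u ∈ hammingBall n e | u + z ∈ hammingBall n e} := by
  have hsolve : ∀ u v : Fin n → V4, u + v + z = 0 ↔ v = u + z := by
    have hneg : ∀ a : V4, -a = a := by decide
    intro u v
    rw [add_right_comm, add_eq_zero_iff_eq_neg, eq_comm, neg_eq_iff_eq_neg]
    simp only [funext_iff, Pi.neg_apply, hneg]
  simp only [fVal_hammingNorm_eq_sum, fCoeff_hammingNorm_mul_innerSign]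
  rw [Finset.sum_comm]
  simp only [Finset.sum_comm (γ := Fin n → V4) (s := univ), sum_innerSign_right, hsolve,
    Finset.sum_ite_eq', Finset.sum_ite, Finset.sum_const_zero, add_zero, Finset.sum_const,
    nsmul_eq_mul, mul_comm]

lemma K_zero_weight (i n : ℕ) : K i 0 n = 3 ^ i * n.choose i := by
  rw [K, Finset.sum_range_succ']
  simp

lemma card_hammingNorm_eq (i : ℕ) : #{v : Fin n → V4 | hammingNorm v = i} = 3 ^ i * n.choose i := by
  have h := sum_innerSign_sphere (0 : Fin n → V4) i
  simp only [innerSign_comm _ 0] at h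
  simp only [innerSign, Pi.zero_apply, pairingSign_zero_left, Finset.prod_const_one,
    Finset.sum_const, nsmul_eq_mul, mul_one, hammingNorm_zero, K_zero_weight] at h
  exact_mod_cast h

lemma card_hammingBall_le (m : ℕ) (hn : n ≠ 0) :
    #(hammingBall n m) ≤ (m + 1) * (3 ^ m * n ^ m) := by
  rw [Finset.card_eq_sum_card_fiberwise (s := hammingBall n m) (f := hammingNorm)
    (t := range (m + 1)) fun v hv => mem_range_succ_iff.2 (mem_filter.1 hv).2]
  calc ∑ i ∈ range (m + 1), #{v ∈ hammingBall n m | hammingNorm v = i}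
      ≤ ∑ i ∈ range (m + 1), 3 ^ m * n ^ m := by
        refine Finset.sum_le_sum fun i hi => ?_
        have him : i ≤ m := mem_range_succ_iff.1 hi
        calc #{v ∈ hammingBall n m | hammingNorm v = i}
            ≤ #{v : Fin n → V4 | hammingNorm v = i} :=
              Finset.card_le_card (Finset.filter_subset_filter _ (Finset.subset_univ _))
          _ = 3 ^ i * n.choose i := card_hammingNorm_eq i
          _ ≤ 3 ^ m * n ^ m := by
              gcongr
              · norm_num
              · exact (Nat.choose_le_pow n i).trans (Nat.pow_le_pow_right (by omega) him)
    _ = (m + 1) * (3 ^ m * n ^ m) := by simp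

def offSupport (z u : Fin n → V4) : Fin n → V4 := fun k => if z k = 0 then u k else 0

lemma two_mul_hammingNorm_offSupport_add_le (z u : Fin n → V4) :
    2 * hammingNorm (offSupport z u) + hammingNorm z ≤ hammingNorm u + hammingNorm (u + z) := by
  have hcoord : ∀ a b : V4, 2 * (if (if b = 0 then a else 0) ≠ 0 then 1 else 0) +
      (if b ≠ 0 then 1 else 0) ≤ (if a ≠ 0 then 1 else 0) + (if a + b ≠ 0 then 1 else 0) := by
    decide
  simp only [hammingNorm, Finset.card_filter]
  simp only [offSupport, Pi.add_apply, Finset.mul_sum, ← Finset.sum_add_distrib]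
  exact Finset.sum_le_sum fun k _ => hcoord (u k) (z k)

lemma card_filter_add_mem_hammingBall_le (e : ℕ) {z : Fin n → V4} (hz : z ≠ 0) :
    #{u ∈ hammingBall n (e + 1) | u + z ∈ hammingBall n (e + 1)} ≤
      4 ^ hammingNorm z * #(hammingBall n e) := by
  calc #{u ∈ hammingBall n (e + 1) | u + z ∈ hammingBall n (e + 1)}
      ≤ #((univ : Finset ({k // z k ≠ 0} → V4)) ×ˢ hammingBall n e) := by
        refine Finset.card_le_card_of_injOn (fun u => (fun k => u k, offSupport z u)) ?_ ?_
        · intro u hu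
          simp only [Finset.mem_coe, Finset.mem_product, mem_filter, hammingBall, mem_univ,
            true_and] at hu ⊢
          have := two_mul_hammingNorm_offSupport_add_le z u
          have := hammingNorm_pos_iff.2 hz
          omega
        · intro u _ v _ huv
          simp only [Prod.mk.injEq, funext_iff, Subtype.forall, offSupport] at huv
          funext k
          by_cases hk : z k = 0
          · simpa [hk] using huv.2 k
          · exact huv.1 k hk
    _ = 4 ^ hammingNorm z * #(hammingBall n e) := by
        rw [Finset.card_product, Finset.card_univ, Fintype.card_fun, Fintype.card_subtype]
        rfl

lemma filter_add_mem_hammingBall_zero_eq_empty {z : Fin n → V4} (hz : z ≠ 0) :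
    {u ∈ hammingBall n 0 | u + z ∈ hammingBall n 0} = ∅ := by
  refine Finset.filter_eq_empty_iff.2 fun u hu huz => ?_
  simp only [hammingBall, mem_filter, mem_univ, true_and] at hu huz
  have := two_mul_hammingNorm_offSupport_add_le z u
  have := hammingNorm_pos_iff.2 hz
  omega

lemma card_filter_add_mem_hammingBall_mul_le (e : ℕ) {z : Fin n → V4} (hz : z ≠ 0) :
    #{u ∈ hammingBall n e | u + z ∈ hammingBall n e} * n ≤
      4 ^ hammingNorm z * e * 3 ^ e * n ^ e := by
  have hn : n ≠ 0 := by
    rintro rfl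
    exact hz (Subsingleton.elim _ _)
  rcases e with _ | e
  · simp [filter_add_mem_hammingBall_zero_eq_empty hz]
  calc #{u ∈ hammingBall n (e + 1) | u + z ∈ hammingBall n (e + 1)} * n
      ≤ 4 ^ hammingNorm z * ((e + 1) * (3 ^ e * n ^ e)) * n := by
        gcongr
        exact (card_filter_add_mem_hammingBall_le e hz).trans
          (Nat.mul_le_mul_left _ (card_hammingBall_le e hn))
    _ ≤ 4 ^ hammingNorm z * (e + 1) * 3 ^ (e + 1) * n ^ (e + 1) := by
        ring_nf
        omega

lemma exists_hammingNorm_eq {t : ℕ} (ht : t ≤ n) : ∃ z : Fin n → V4, hammingNorm z = t := by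
  obtain ⟨s, -, hs⟩ :=
    Finset.exists_subset_card_eq (s := (univ : Finset (Fin n))) (by simpa using ht)
  refine ⟨fun k => if k ∈ s then (1, 0) else 0, ?_⟩
  rw [hammingNorm, ← hs]
  congr 1
  ext k
  by_cases hk : k ∈ s <;> simp [hk]

end HammingSpace

/-- Li–Xing asymptotic estimate: for fixed `e` and fixed `t ≥ 1`,
`f(t; n) / (4^n · n^e) → 0` as `n → ∞`. -/
theorem fVal_pos_t_asymptotics (e t : ℕ) (ht : 1 ≤ t) :
    Filter.Tendsto (fun n : ℕ => (fVal e t n : ℝ) / ((4 : ℝ) ^ n * (n : ℝ) ^ e))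
      Filter.atTop (nhds 0) := by
  have hbound : ∀ᶠ n : ℕ in atTop, 0 ≤ (fVal e t n : ℝ) / ((4 : ℝ) ^ n * (n : ℝ) ^ e) ∧
      (fVal e t n : ℝ) / ((4 : ℝ) ^ n * (n : ℝ) ^ e) ≤ ((4 ^ t * e * 3 ^ e : ℕ) : ℝ) / n := by
    filter_upwards [eventually_ge_atTop t] with n htn
    obtain ⟨z, rfl⟩ := exists_hammingNorm_eq htn
    have hz : z ≠ 0 := hammingNorm_pos_iff.1 ht
    have hn : (0 : ℝ) < n := Nat.cast_pos.2 (lt_of_lt_of_le ht htn)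
    rw [fVal_hammingNorm, Int.cast_mul, Int.cast_pow, Int.cast_natCast, Int.cast_ofNat,
      mul_div_mul_left _ _ (by positivity), div_le_div_iff₀ (by positivity) hn]
    refine ⟨by positivity, ?_⟩
    exact_mod_cast card_filter_add_mem_hammingBall_mul_le e hz
  exact squeeze_zero' (hbound.mono fun _ h => h.1) (hbound.mono fun _ h => h.2)
    (tendsto_const_div_atTop_nhds_zero_nat _)
end
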